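/- Let K ⊂ ℝⁿ be a strictly convex, smooth, compact set with 0 in its interior, and F_K(x) = −ln(1 − ‖x‖_K) − ‖x‖_K with Fenchel conjugate F_K*(d) = ‖d‖_{K°} − ln(1 + ‖d‖_{K°}). Then for all u, v ∈ ℝⁿ \ {0}, writing Θ = (‖u‖_{K°} − ‖v‖_{K°})/(1 + ‖v‖_{K°}), one has the exact identity D_{F_K*}(u, v) = Θ − ln(1 + Θ) − (‖u‖_{K°} − ‖v‖_{K°})²/(2(1 + ‖v‖_{K°})) + D_{½‖·‖²_{K°}}(u, v)/(1 + ‖v‖_{K°}). -/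

import Mathlib

open scoped InnerProductSpace
open scoped Pointwise
open MeasureTheory

noncomputable section

abbrev Euc (n : ℕ) := EuclideanSpace ℝ (Fin n)

/-- The polar set `K° = {d | ⟪d, x⟫ ≤ 1 for all x ∈ K}`. -/
def polarSet {n : ℕ} (K : Set (Euc n)) : Set (Euc n) := {d | ∀ x ∈ K, ⟪d, x⟫_ℝ ≤ 1}

/-- The normal cone of `K` at `y`. -/
def normalCone {n : ℕ} (K : Set (Euc n)) (y : Euc n) : Set (Euc n) :=
  {d | ∀ x ∈ K, 0 ≤ ⟪d, y - x⟫_ℝ}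

/-- A set is smooth if at each boundary point there is exactly one normal direction in `∂K°`. -/
def SmoothSet {n : ℕ} (K : Set (Euc n)) : Prop :=
  ∀ x ∈ frontier K, ∃! d, d ∈ normalCone K x ∩ frontier (polarSet K)

/-- A set is strictly convex if the midpoint of two distinct boundary points is interior. -/
def StrictlyConvexSet {n : ℕ} (K : Set (Euc n)) : Prop :=
  ∀ x₁ ∈ frontier K, ∀ x₂ ∈ frontier K, x₁ ≠ x₂ → midpoint ℝ x₁ x₂ ∈ interior K

/-- `(α, q)`-uniform convexity of a set w.r.t. its gauge. -/
def UniformlyConvexSet {n : ℕ} (K : Set (Euc n)) (α q : ℝ) : Prop :=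
  ∀ x ∈ K, ∀ y ∈ K, ∀ z ∈ K, ∀ γ ∈ Set.Icc (0:ℝ) 1,
    γ • x + (1 - γ) • y + (α / q * (γ * (1 - γ)) * gauge K (x - y) ^ q) • z ∈ K

/-- The barrier function `F_K(x) = -ln(1 - ‖x‖_K) - ‖x‖_K`. -/
def FK {n : ℕ} (K : Set (Euc n)) (x : Euc n) : ℝ := -Real.log (1 - gauge K x) - gauge K x

/-- Fenchel conjugate of the barrier `F_K` (defined on `D_K = {‖x‖_K < 1}`). -/
def FstarK {n : ℕ} (K : Set (Euc n)) (d : Euc n) : ℝ :=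
  sSup ((fun x => ⟪x, d⟫_ℝ - FK K x) '' {x | gauge K x < 1})

/-- Bregman divergence `D_F(u, v) = F(u) - F(v) - ⟪∇F(v), u - v⟫`. -/
def breg {n : ℕ} (F : Euc n → ℝ) (u v : Euc n) : ℝ :=
  F u - F v - ⟪gradient F v, u - v⟫_ℝ

def l1Ball {n : ℕ} (r : ℝ) : Set (Euc n) := {x | ∑ i, |x i| ≤ r}
def linfBall {n : ℕ} (R : ℝ) : Set (Euc n) := {x | ∀ i, |x i| ≤ R}
def l2Ball {n : ℕ} (r : ℝ) : Set (Euc n) := Metric.closedBall 0 r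
def lqBall {n : ℕ} (q r : ℝ) : Set (Euc n) := {x | ∑ i, |x i| ^ q ≤ r ^ q}

/-!
Write `a = ‖v‖_{K°}` and `b = ‖u‖_{K°}`. Both `F_K*` and `½‖·‖²_{K°}` are functions of the gauge
`‖·‖_{K°}` alone, namely `φ(t) = t − ln(1 + t)` and `ψ(t) = t²/2` composed with it, so by the chain
rule their gradients at `v` are `φ'(a) = a/(1 + a)` and `ψ'(a) = a` times the gradient of the gauge.
Hence the linear term of the first Bregman divergence is that of the second divided by `1 + a`,
and what remains is an identity in `a` and `b` alone, using `1 + Θ = (1 + b)/(1 + a)`.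
At points where the gauge is not differentiable, neither composite is (since `φ'(a), ψ'(a) ≠ 0`
for `a > 0`, `φ` and `ψ` are locally invertible there), so both gradients take the junk value `0`
and the same computation applies.
-/

open scoped Topology

section PolarSet

variable {n : ℕ} {K : Set (Euc n)}

theorem convex_polarSet (K : Set (Euc n)) : Convex ℝ (polarSet K) := by
  intro d₁ hd₁ d₂ hd₂ s t hs ht hst x hx
  have h₁ : ⟪d₁, x⟫_ℝ ≤ 1 := hd₁ x hx
  have h₂ : ⟪d₂, x⟫_ℝ ≤ 1 := hd₂ x hx
  calc ⟪s • d₁ + t • d₂, x⟫_ℝ = s * ⟪d₁, x⟫_ℝ + t * ⟪d₂, x⟫_ℝ := by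
        rw [inner_add_left, real_inner_smul_left, real_inner_smul_left]
    _ ≤ s * 1 + t * 1 := by gcongr
    _ = 1 := by rw [mul_one, mul_one, hst]

theorem polarSet_mem_nhds_zero (hK : Bornology.IsBounded K) : polarSet K ∈ 𝓝 (0 : Euc n) := by
  obtain ⟨R, hR0, hR⟩ := hK.exists_pos_norm_le
  refine Filter.mem_of_superset (Metric.ball_mem_nhds 0 (inv_pos.2 hR0)) fun d hd x hx => ?_
  rw [mem_ball_zero_iff] at hd
  calc ⟪d, x⟫_ℝ ≤ ‖d‖ * ‖x‖ := real_inner_le_norm d x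
    _ ≤ R⁻¹ * R := by gcongr; exact hR x hx
    _ = 1 := inv_mul_cancel₀ hR0.ne'

theorem isBounded_polarSet (h0 : (0 : Euc n) ∈ interior K) :
    Bornology.IsBounded (polarSet K) := by
  obtain ⟨r, hr0, hr⟩ := Metric.mem_nhds_iff.1 (mem_interior_iff_mem_nhds.1 h0)
  refine isBounded_iff_forall_norm_le.2 ⟨2 / r, fun d hd => ?_⟩
  rcases eq_or_ne d 0 with rfl | hd0
  · rw [norm_zero]; positivity
  have hnd : 0 < ‖d‖ := norm_pos_iff.2 hd0
  have hxK : (r / (2 * ‖d‖)) • d ∈ K := by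
    apply hr
    rw [mem_ball_zero_iff, norm_smul, Real.norm_of_nonneg (by positivity)]
    field_simp
    linarith
  have hle := hd _ hxK
  rw [real_inner_smul_right, real_inner_self_eq_norm_sq] at hle
  rw [le_div_iff₀ hr0]
  field_simp at hle
  nlinarith

theorem continuous_gauge_polarSet (hK : Bornology.IsBounded K) :
    Continuous (gauge (polarSet K)) :=
  continuous_gauge (convex_polarSet K) (polarSet_mem_nhds_zero hK)

theorem gauge_polarSet_pos (hK : Bornology.IsBounded K) (h0 : (0 : Euc n) ∈ interior K)
    {d : Euc n} (hd : d ≠ 0) : 0 < gauge (polarSet K) d :=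
  (gauge_pos (absorbent_nhds_zero (polarSet_mem_nhds_zero hK))
    ((NormedSpace.isVonNBounded_iff ℝ).2 (isBounded_polarSet h0))).2 hd

end PolarSet

section ChainRule

variable {E : Type*} [NormedAddCommGroup E] [NormedSpace ℝ E]
  {g : E → ℝ} {φ : ℝ → ℝ} {c : ℝ} {x : E}

theorem differentiableAt_comp_iff_of_hasStrictDerivAt (hg : ContinuousAt g x)
    (hφ : HasStrictDerivAt φ c (g x)) (hc : c ≠ 0) :
    DifferentiableAt ℝ (fun y => φ (g y)) x ↔ DifferentiableAt ℝ g x := by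
  refine ⟨fun hφg => ?_, fun hg' =>
    (hφ.hasDerivAt.comp_hasFDerivAt x hg'.hasFDerivAt).differentiableAt⟩
  have hinv : ∀ᶠ y in 𝓝 x, hφ.localInverse φ c (g x) hc (φ (g y)) = g y :=
    hg.eventually (hφ.eventually_left_inverse hc)
  exact ((hφ.to_localInverse hc).hasDerivAt.differentiableAt.comp x hφg).congr_of_eventuallyEq
    (hinv.mono fun y hy => hy.symm)

end ChainRule

section Gradient

variable {E : Type*} [NormedAddCommGroup E] [InnerProductSpace ℝ E] [CompleteSpace E]
  {g : E → ℝ} {φ : ℝ → ℝ} {c : ℝ} {x : E}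

theorem gradient_comp_of_hasStrictDerivAt (hg : ContinuousAt g x)
    (hφ : HasStrictDerivAt φ c (g x)) (hc : c ≠ 0) :
    gradient (fun y => φ (g y)) x = c • gradient g x := by
  by_cases hg' : DifferentiableAt ℝ g x
  · have hφg : HasFDerivAt (fun y => φ (g y)) (c • fderiv ℝ g x) x :=
      hφ.hasDerivAt.comp_hasFDerivAt x hg'.hasFDerivAt
    rw [gradient, hφg.fderiv, map_smul, gradient]
  · rw [gradient_eq_zero_of_not_differentiableAt hg', smul_zero,
      gradient_eq_zero_of_not_differentiableAt
        (mt (differentiableAt_comp_iff_of_hasStrictDerivAt hg hφ hc).1 hg')]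

end Gradient

theorem hasStrictDerivAt_sub_log_one_add {a : ℝ} (ha : 1 + a ≠ 0) :
    HasStrictDerivAt (fun t => t - Real.log (1 + t)) (a / (1 + a)) a := by
  have hlog := (Real.hasStrictDerivAt_log ha).comp a ((hasStrictDerivAt_id a).const_add 1)
  exact ((hasStrictDerivAt_id a).sub hlog).congr_deriv (by field_simp; ring)

theorem hasStrictDerivAt_sq_div_two (a : ℝ) : HasStrictDerivAt (fun t => t ^ 2 / 2) a a :=
  ((hasStrictDerivAt_pow 2 a).div_const 2).congr_deriv (by ring)

theorem log_one_add_div_one_add {a b : ℝ} (ha : 0 < 1 + a) (hb : 0 < 1 + b) :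
    Real.log (1 + (b - a) / (1 + a)) = Real.log (1 + b) - Real.log (1 + a) := by
  rw [← Real.log_div hb.ne' ha.ne']
  congr 1
  field_simp
  ring

theorem bregman_conjugate_identity_general {n : ℕ}
    (K : Set (Euc n)) (hKcomp : IsCompact K)
    (h0 : (0 : Euc n) ∈ interior K)
    (u v : Euc n) (hv : v ≠ 0)
    (Θ : ℝ)
    (hΘ : Θ = (gauge (polarSet K) u - gauge (polarSet K) v)
                / (1 + gauge (polarSet K) v)) :
    breg (fun d => gauge (polarSet K) d - Real.log (1 + gauge (polarSet K) d)) u v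
      = Θ - Real.log (1 + Θ)
        - (gauge (polarSet K) u - gauge (polarSet K) v) ^ 2
            / (2 * (1 + gauge (polarSet K) v))
        + breg (fun d => gauge (polarSet K) d ^ 2 / 2) u v
            / (1 + gauge (polarSet K) v) := by
  set g := gauge (polarSet K)
  have ha : 0 < g v := gauge_polarSet_pos hKcomp.isBounded h0 hv
  have hb : 0 ≤ g u := gauge_nonneg u
  have hg : ContinuousAt g v := (continuous_gauge_polarSet hKcomp.isBounded).continuousAt
  have hgradF :
      gradient (fun d => g d - Real.log (1 + g d)) v = (g v / (1 + g v)) • gradient g v :=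
    gradient_comp_of_hasStrictDerivAt hg (hasStrictDerivAt_sub_log_one_add (by positivity))
      (by positivity)
  have hgradG : gradient (fun d => g d ^ 2 / 2) v = g v • gradient g v :=
    gradient_comp_of_hasStrictDerivAt hg (hasStrictDerivAt_sq_div_two (g v)) ha.ne'
  rw [hΘ, log_one_add_div_one_add (by positivity) (by positivity)]
  simp only [breg, hgradF, hgradG, real_inner_smul_left]
  field_simp
  ring

/-- Exact identity for the Bregman divergence of the conjugate barrier
`F_K*(d) = ‖d‖_{K°} - ln(1 + ‖d‖_{K°})`. -/
theorem bregman_conjugate_identity {n : ℕ}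
    (K : Set (Euc n)) (hKcomp : IsCompact K) (hKconv : Convex ℝ K)
    (h0 : (0 : Euc n) ∈ interior K)
    (hstrict : StrictlyConvexSet K) (hsmooth : SmoothSet K)
    (u v : Euc n) (hu : u ≠ 0) (hv : v ≠ 0)
    (Θ : ℝ)
    (hΘ : Θ = (gauge (polarSet K) u - gauge (polarSet K) v)
                / (1 + gauge (polarSet K) v)) :
    breg (fun d => gauge (polarSet K) d - Real.log (1 + gauge (polarSet K) d)) u v
      = Θ - Real.log (1 + Θ)
        - (gauge (polarSet K) u - gauge (polarSet K) v) ^ 2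
            / (2 * (1 + gauge (polarSet K) v))
        + breg (fun d => gauge (polarSet K) d ^ 2 / 2) u v
            / (1 + gauge (polarSet K) v) :=
  bregman_conjugate_identity_general K hKcomp h0 u v hv Θ hΘ
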